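/- Let J ⊆ [n] with M⁰_J invertible, N = [n]∖J, and define r_J = -(M⁰_J)^{-1} q_J, r_N = 0, D_{J,i} = M̃^{J,i} q_J with M̃^{J,i} = (M⁰_J)^{-1} Mⁱ_J (M⁰_J)^{-1}, D_{N,·} = 0, and assume D_{[h],·} = 0. Then z(ζ) = Dζ + r is an AAR solution of the matrix-uncertain LCP if and only if: (i) q_J ∈ ⋂_{i,j∈[k]} ker(Mⁱ_J M̃^{J,j} + Mʲ_J M̃^{J,i}); (ii) (Σ_i ζ_i M̃^{J,i} - (M⁰_J)^{-1}) q_J ≥ 0 for all ζ ∈ [-1,1]^k; (iii) M_{N,J}(ζ)(Σ_i ζ_i M̃^{J,i} - (M⁰_J)^{-1}) q_J + q_N ≥ 0 for all ζ ∈ [-1,1]^k. -/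
import Mathlib


open Matrix BigOperators
open scoped Classical

noncomputable section

/-- `z(ζ) = Dζ + r` is an affinely adjustable robust solution of the
matrix-uncertain LCP `0 ≤ z(ζ) ⊥ M(ζ) z(ζ) + q ≥ 0` for all `ζ ∈ [-1,1]^k`,
where `M(ζ) = M⁰ + Σ ζ_i Mⁱ`. -/
def IsAARM {n k : ℕ} (M0 : Matrix (Fin n) (Fin n) ℝ)
    (Mi : Fin k → Matrix (Fin n) (Fin n) ℝ) (q : Fin n → ℝ)
    (D : Matrix (Fin n) (Fin k) ℝ) (r : Fin n → ℝ) : Prop :=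
  ∀ ζ : Fin k → ℝ, (∀ t, -1 ≤ ζ t ∧ ζ t ≤ 1) →
    (∀ i, 0 ≤ (D.mulVec ζ + r) i) ∧
    (∀ i, 0 ≤ ((M0 + ∑ t, ζ t • Mi t).mulVec (D.mulVec ζ + r) + q) i) ∧
    ∑ i, (D.mulVec ζ + r) i *
        ((M0 + ∑ t, ζ t • Mi t).mulVec (D.mulVec ζ + r) + q) i = 0

/-- The principal submatrix of `A` indexed by the finset `J`. -/
def subM {n : ℕ} (A : Matrix (Fin n) (Fin n) ℝ) (J : Finset (Fin n)) :
    Matrix J J ℝ :=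
  Matrix.of fun i j => A i.1 j.1

/-- The subvector of `q` indexed by `J`. -/
def subV {n : ℕ} (q : Fin n → ℝ) (J : Finset (Fin n)) : J → ℝ :=
  fun i => q i.1

/-- `M̃^{J,i} = (M⁰_J)⁻¹ Mⁱ_J (M⁰_J)⁻¹`. -/
def Mtil {n k : ℕ} (M0 : Matrix (Fin n) (Fin n) ℝ)
    (Mi : Fin k → Matrix (Fin n) (Fin n) ℝ) (J : Finset (Fin n)) (t : Fin k) :
    Matrix J J ℝ :=
  (subM M0 J)⁻¹ * subM (Mi t) J * (subM M0 J)⁻¹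

lemma mulVec_apply' {m k' : Type*} [Fintype k'] (M : Matrix m k' ℝ) (v : k' → ℝ) (i : m) :
    M.mulVec v i = ∑ j, M i j * v j := rfl

lemma sum_mulVec' {ι m : Type*} [Fintype m] (s : Finset ι)
    (M : ι → Matrix m m ℝ) (v : m → ℝ) (i : m) :
    ((∑ t ∈ s, M t).mulVec v) i = ∑ t ∈ s, (M t).mulVec v i := by
  simp only [Matrix.mulVec, dotProduct, Matrix.sum_apply, Finset.sum_mul]
  rw [Finset.sum_comm]

lemma smul_mulVec' {m : Type*} [Fintype m] (c : ℝ) (M : Matrix m m ℝ) (v : m → ℝ) (i : m) :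
    ((c • M).mulVec v) i = c * (M.mulVec v i) := by
  rw [Matrix.smul_mulVec]; rfl

lemma matrix_id' {m : Type*} [Fintype m] [DecidableEq m] (A X : Matrix m m ℝ)
    (hAA : A * A⁻¹ = 1) :
    (A + X) * (A⁻¹ * X * A⁻¹ - A⁻¹) + 1 = X * (A⁻¹ * X * A⁻¹) := by
  have e : (A + X) * (A⁻¹ * X * A⁻¹ - A⁻¹) + 1
      = (A * A⁻¹) * X * A⁻¹ - A * A⁻¹ + X * (A⁻¹ * X * A⁻¹) - X * A⁻¹ + 1 := by
    noncomm_ring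
  rw [e, hAA]
  noncomm_ring

lemma sum_single_single' {k : ℕ} (t s : Fin k) (v : Fin k → Fin k → ℝ) :
    ∑ a, ∑ b, ((if a = t then (1:ℝ) else 0) * (if b = s then 1 else 0)) * v a b = v t s := by
  simp [ite_mul, one_mul, zero_mul, Finset.sum_ite_eq']

lemma c_decomp' {k : ℕ} (t s : Fin k) (v : Fin k → Fin k → ℝ) :
    ∑ a, ∑ b,
      ((((if a = t then (1:ℝ) else 0) + (if a = s then 1 else 0)) *
        ((if b = t then (1:ℝ) else 0) + (if b = s then 1 else 0))) * v a b)
      = v t t + v t s + v s t + v s s := by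
  have e : ∀ a b : Fin k,
      (((if a = t then (1:ℝ) else 0) + (if a = s then 1 else 0)) *
        ((if b = t then (1:ℝ) else 0) + (if b = s then 1 else 0))) * v a b
      = ((if a = t then (1:ℝ) else 0) * (if b = t then 1 else 0)) * v a b
        + ((if a = t then (1:ℝ) else 0) * (if b = s then 1 else 0)) * v a b
        + ((if a = s then (1:ℝ) else 0) * (if b = t then 1 else 0)) * v a b
        + ((if a = s then (1:ℝ) else 0) * (if b = s then 1 else 0)) * v a b := by
    intro a b; ring
  simp only [e, Finset.sum_add_distrib]
  rw [sum_single_single', sum_single_single', sum_single_single', sum_single_single']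

/-- full characterization of AAR solutions of the
matrix-uncertain LCP when `M⁰_J` is invertible and `D`, `r` are given by
the formulas of the preceding corollary. -/
theorem stmt_19 (n k h : ℕ) (M0 : Matrix (Fin n) (Fin n) ℝ)
    (Mi : Fin k → Matrix (Fin n) (Fin n) ℝ) (q : Fin n → ℝ)
    (J : Finset (Fin n))
    (hinv : IsUnit (subM M0 J).det)
    (D : Matrix (Fin n) (Fin k) ℝ) (r : Fin n → ℝ)
    (hsupp : ∀ i : Fin n, i ∈ J ↔ 0 < r i)
    (hrJ : ∀ i : J, r i.1 = -((subM M0 J)⁻¹.mulVec (subV q J)) i)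
    (hrN : ∀ i : Fin n, i ∉ J → r i = 0)
    (hDJ : ∀ (t : Fin k) (i : J), D i.1 t = ((Mtil M0 Mi J t).mulVec (subV q J)) i)
    (hDN : ∀ i : Fin n, i ∉ J → ∀ t, D i t = 0)
    (hDh : ∀ i : Fin n, (i : ℕ) < h → ∀ t, D i t = 0) :
    IsAARM M0 Mi q D r ↔
      -- (i) `q_J ∈ ⋂ ker(Mᵗ_J M̃^{J,s} + Mˢ_J M̃^{J,t})`
      ((∀ t s : Fin k,
          (subM (Mi t) J * Mtil M0 Mi J s +
            subM (Mi s) J * Mtil M0 Mi J t).mulVec (subV q J) = 0) ∧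
       -- (ii) `(Σ ζ_t M̃^{J,t} - (M⁰_J)⁻¹) q_J ≥ 0` on the box
       (∀ ζ : Fin k → ℝ, (∀ t, -1 ≤ ζ t ∧ ζ t ≤ 1) →
          ∀ i : J,
            0 ≤ (((∑ t, ζ t • Mtil M0 Mi J t) - (subM M0 J)⁻¹).mulVec
                (subV q J)) i) ∧
       -- (iii) `M_{N,J}(ζ)(Σ ζ_t M̃^{J,t} - (M⁰_J)⁻¹) q_J + q_N ≥ 0` on the box
       (∀ ζ : Fin k → ℝ, (∀ t, -1 ≤ ζ t ∧ ζ t ≤ 1) →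
          ∀ i : Fin n, i ∉ J →
            0 ≤ (∑ j : J,
                (M0 i j.1 + ∑ t, ζ t * (Mi t) i j.1) *
                  ((((∑ t, ζ t • Mtil M0 Mi J t) - (subM M0 J)⁻¹).mulVec
                    (subV q J)) j))
              + q i)) := by
  have hAA : subM M0 J * (subM M0 J)⁻¹ = 1 := Matrix.mul_nonsing_inv _ hinv
  -- z vanishes off J
  have hz0 : ∀ (ζ : Fin k → ℝ) (i : Fin n), i ∉ J → (D.mulVec ζ + r) i = 0 := by
    intro ζ i hi
    show D.mulVec ζ i + r i = 0
    rw [mulVec_apply', hrN i hi]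
    simp [hDN i hi]
  -- z on J
  have hzJ : ∀ (ζ : Fin k → ℝ) (i : J),
      (D.mulVec ζ + r) i.1
        = (((∑ t, ζ t • Mtil M0 Mi J t) - (subM M0 J)⁻¹).mulVec (subV q J)) i := by
    intro ζ i
    show D.mulVec ζ i.1 + r i.1 = _
    rw [Matrix.sub_mulVec, Pi.sub_apply, sum_mulVec']
    simp only [smul_mulVec']
    rw [mulVec_apply', hrJ i]
    have e : ∀ t : Fin k, D i.1 t * ζ t
        = ζ t * ((Mtil M0 Mi J t).mulVec (subV q J)) i := fun t => by
      rw [hDJ t i]; ring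
    rw [Finset.sum_congr rfl fun t _ => e t]
    ring
  -- row formula
  have hrow : ∀ (ζ : Fin k → ℝ) (i : Fin n),
      ((M0 + ∑ t, ζ t • Mi t).mulVec (D.mulVec ζ + r) + q) i
        = (∑ j : J, (M0 i j.1 + ∑ t, ζ t * (Mi t) i j.1) *
            ((((∑ t, ζ t • Mtil M0 Mi J t) - (subM M0 J)⁻¹).mulVec (subV q J)) j)) + q i := by
    intro ζ i
    show (M0 + ∑ t, ζ t • Mi t).mulVec (D.mulVec ζ + r) i + q i = _
    congr 1
    rw [mulVec_apply']
    rw [← Finset.sum_subset (Finset.subset_univ J)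
        (fun j _ hj => by rw [hz0 ζ j hj, mul_zero])]
    rw [← Finset.sum_coe_sort J
        (fun j => (M0 + ∑ t, ζ t • Mi t) i j * (D.mulVec ζ + r) j)]
    refine Finset.sum_congr rfl fun j _ => ?_
    rw [hzJ ζ j]
    congr 1
    simp [Matrix.sum_apply]
  -- X * Y expansion
  have hXY : ∀ ζ : Fin k → ℝ,
      (∑ t, ζ t • subM (Mi t) J) * (∑ t, ζ t • Mtil M0 Mi J t)
        = ∑ t, ∑ s, (ζ t * ζ s) • (subM (Mi t) J * Mtil M0 Mi J s) := by
    intro ζ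
    rw [Finset.sum_mul]
    refine Finset.sum_congr rfl fun t _ => ?_
    rw [Matrix.smul_mul, Matrix.mul_sum, Finset.smul_sum]
    refine Finset.sum_congr rfl fun s _ => ?_
    rw [Matrix.mul_smul, smul_smul]
  have hY : ∀ ζ : Fin k → ℝ,
      (∑ t, ζ t • Mtil M0 Mi J t)
        = (subM M0 J)⁻¹ * (∑ t, ζ t • subM (Mi t) J) * (subM M0 J)⁻¹ := by
    intro ζ
    rw [Matrix.mul_sum, Matrix.sum_mul]
    refine Finset.sum_congr rfl fun t _ => ?_
    rw [Matrix.mul_smul, Matrix.smul_mul, Mtil]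
  -- the quadratic formula on J
  have hQ : ∀ (ζ : Fin k → ℝ) (i : J),
      ((M0 + ∑ t, ζ t • Mi t).mulVec (D.mulVec ζ + r) + q) i.1
        = ∑ t, ∑ s, ζ t * ζ s *
            (((subM (Mi t) J * Mtil M0 Mi J s).mulVec (subV q J)) i) := by
    intro ζ i
    rw [hrow ζ i.1]
    have e1 : (∑ j : J, (M0 i.1 j.1 + ∑ t, ζ t * (Mi t) i.1 j.1) *
            ((((∑ t, ζ t • Mtil M0 Mi J t) - (subM M0 J)⁻¹).mulVec (subV q J)) j)) + q i.1
        = ((subM M0 J + ∑ t, ζ t • subM (Mi t) J).mulVec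
            (((∑ t, ζ t • Mtil M0 Mi J t) - (subM M0 J)⁻¹).mulVec (subV q J))
            + subV q J) i := by
      show _ = (subM M0 J + ∑ t, ζ t • subM (Mi t) J).mulVec
            (((∑ t, ζ t • Mtil M0 Mi J t) - (subM M0 J)⁻¹).mulVec (subV q J)) i + subV q J i
      congr 1
      rw [mulVec_apply']
      refine Finset.sum_congr rfl fun j _ => ?_
      congr 1
      simp [subM, Matrix.sum_apply]
    rw [e1]
    rw [Matrix.mulVec_mulVec]
    have e2 : ((subM M0 J + ∑ t, ζ t • subM (Mi t) J) *
          ((∑ t, ζ t • Mtil M0 Mi J t) - (subM M0 J)⁻¹)).mulVec (subV q J) + subV q J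
        = (((subM M0 J + ∑ t, ζ t • subM (Mi t) J) *
          ((∑ t, ζ t • Mtil M0 Mi J t) - (subM M0 J)⁻¹) + 1)).mulVec (subV q J) := by
      rw [Matrix.add_mulVec, Matrix.one_mulVec]
    rw [e2]
    have e3 : (subM M0 J + ∑ t, ζ t • subM (Mi t) J) *
          ((∑ t, ζ t • Mtil M0 Mi J t) - (subM M0 J)⁻¹) + 1
        = ∑ t, ∑ s, (ζ t * ζ s) • (subM (Mi t) J * Mtil M0 Mi J s) := by
      rw [hY ζ, matrix_id' _ _ hAA, ← hY ζ, hXY ζ]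
    rw [e3, sum_mulVec']
    refine Finset.sum_congr rfl fun t _ => ?_
    rw [sum_mulVec']
    refine Finset.sum_congr rfl fun s _ => ?_
    rw [smul_mulVec']
  constructor
  · -- forward
    intro H
    have hkey : ∀ (t s : Fin k) (i : J),
        ((subM (Mi t) J * Mtil M0 Mi J t).mulVec (subV q J)) i
        + ((subM (Mi t) J * Mtil M0 Mi J s).mulVec (subV q J)) i
        + ((subM (Mi s) J * Mtil M0 Mi J t).mulVec (subV q J)) i
        + ((subM (Mi s) J * Mtil M0 Mi J s).mulVec (subV q J)) i = 0 := by
      intro t s i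
      set u : Fin k → ℝ :=
        fun a => (if a = t then (1:ℝ) else 0) + (if a = s then 1 else 0) with hu
      have hubd : ∀ a, 0 ≤ u a ∧ u a ≤ 2 := by
        intro a
        rw [hu]
        constructor <;> dsimp only <;> split_ifs <;> norm_num
      have hterm : ∀ (ζ : Fin k → ℝ), (∀ a, -1 ≤ ζ a ∧ ζ a ≤ 1) →
          (D.mulVec ζ + r) i.1 *
            ((M0 + ∑ t', ζ t' • Mi t').mulVec (D.mulVec ζ + r) + q) i.1 = 0 := by
        intro ζ hζ
        obtain ⟨h1, h2, h3⟩ := H ζ hζ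
        exact (Finset.sum_eq_zero_iff_of_nonneg
          (fun j _ => mul_nonneg (h1 j) (h2 j))).mp h3 i.1 (Finset.mem_univ _)
      have key : ∀ ε : ℝ, 0 ≤ ε → ε ≤ 1/2 →
          (r i.1 + ε * (∑ a, D i.1 a * u a)) *
            (ε^2 * (∑ a, ∑ b, (u a * u b) *
              (((subM (Mi a) J * Mtil M0 Mi J b).mulVec (subV q J)) i))) = 0 := by
        intro ε h0 h1
        have hbx : ∀ a, -1 ≤ ε * u a ∧ ε * u a ≤ 1 := by
          intro a
          obtain ⟨hl, hr'⟩ := hubd a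
          constructor <;> nlinarith
        have ht := hterm (fun a => ε * u a) hbx
        rw [hQ (fun a => ε * u a) i] at ht
        have ez : (D.mulVec (fun a => ε * u a) + r) i.1
            = r i.1 + ε * (∑ a, D i.1 a * u a) := by
          show D.mulVec (fun a => ε * u a) i.1 + r i.1 = _
          rw [mulVec_apply', Finset.mul_sum, add_comm]
          congr 1
          exact Finset.sum_congr rfl fun a _ => by ring
        rw [ez] at ht
        have eq2 : (∑ a, ∑ b, (fun a => ε * u a) a * (fun a => ε * u a) b *
              (((subM (Mi a) J * Mtil M0 Mi J b).mulVec (subV q J)) i))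
            = ε^2 * (∑ a, ∑ b, (u a * u b) *
              (((subM (Mi a) J * Mtil M0 Mi J b).mulVec (subV q J)) i)) := by
          rw [Finset.mul_sum]
          refine Finset.sum_congr rfl fun a _ => ?_
          rw [Finset.mul_sum]
          refine Finset.sum_congr rfl fun b _ => ?_
          show ε * u a * (ε * u b) * _ = _
          ring
        rw [eq2] at ht
        exact ht
      have hd0 := key (1/2) (by norm_num) (by norm_num)
      have hd1 := key (1/4) (by norm_num) (by norm_num)
      have hri : 0 < r i.1 := (hsupp i.1).mp i.2
      have e1 : r i.1 * (∑ a, ∑ b, (u a * u b) *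
            (((subM (Mi a) J * Mtil M0 Mi J b).mulVec (subV q J)) i))
          + (∑ a, D i.1 a * u a) * (∑ a, ∑ b, (u a * u b) *
            (((subM (Mi a) J * Mtil M0 Mi J b).mulVec (subV q J)) i)) / 2 = 0 := by
        linear_combination 4 * hd0
      have e2 : r i.1 * (∑ a, ∑ b, (u a * u b) *
            (((subM (Mi a) J * Mtil M0 Mi J b).mulVec (subV q J)) i))
          + (∑ a, D i.1 a * u a) * (∑ a, ∑ b, (u a * u b) *
            (((subM (Mi a) J * Mtil M0 Mi J b).mulVec (subV q J)) i)) / 4 = 0 := by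
        linear_combination 16 * hd1
      have hrc : r i.1 * (∑ a, ∑ b, (u a * u b) *
            (((subM (Mi a) J * Mtil M0 Mi J b).mulVec (subV q J)) i)) = 0 := by
        linarith
      have hcc : (∑ a, ∑ b, (u a * u b) *
            (((subM (Mi a) J * Mtil M0 Mi J b).mulVec (subV q J)) i)) = 0 := by
        rcases mul_eq_zero.mp hrc with h' | h'
        · exact absurd h' (ne_of_gt hri)
        · exact h'
      rw [hu] at hcc
      simp only [] at hcc
      rw [c_decomp' t s
        (fun a b => ((subM (Mi a) J * Mtil M0 Mi J b).mulVec (subV q J)) i)] at hcc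
      exact hcc
    refine ⟨?_, ?_, ?_⟩
    · intro t s
      funext i
      have h1 := hkey t t i
      have h2 := hkey s s i
      have h3 := hkey t s i
      rw [Matrix.add_mulVec]
      rw [Pi.add_apply, Pi.zero_apply]
      linarith
    · intro ζ hζ i
      have := (H ζ hζ).1 i.1
      rwa [hzJ ζ i] at this
    · intro ζ hζ i hi
      have := (H ζ hζ).2.1 i
      rwa [hrow ζ i] at this
  · -- converse
    rintro ⟨hi1, hi2, hi3⟩
    have hv : ∀ (i : J) (a b : Fin k),
        ((subM (Mi a) J * Mtil M0 Mi J b).mulVec (subV q J)) i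
          = -(((subM (Mi b) J * Mtil M0 Mi J a).mulVec (subV q J)) i) := by
      intro i a b
      have e := congrFun (hi1 a b) i
      rw [Matrix.add_mulVec, Pi.add_apply, Pi.zero_apply] at e
      linarith
    have hQ0 : ∀ (ζ : Fin k → ℝ) (i : J),
        ((M0 + ∑ t, ζ t • Mi t).mulVec (D.mulVec ζ + r) + q) i.1 = 0 := by
      intro ζ i
      rw [hQ ζ i]
      have hSS : (∑ t, ∑ s, ζ t * ζ s *
            (((subM (Mi t) J * Mtil M0 Mi J s).mulVec (subV q J)) i))
          = -(∑ t, ∑ s, ζ t * ζ s *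
            (((subM (Mi t) J * Mtil M0 Mi J s).mulVec (subV q J)) i)) := by
        calc (∑ t, ∑ s, ζ t * ζ s *
            (((subM (Mi t) J * Mtil M0 Mi J s).mulVec (subV q J)) i))
            = ∑ s, ∑ t, ζ t * ζ s *
              (((subM (Mi t) J * Mtil M0 Mi J s).mulVec (subV q J)) i) :=
              Finset.sum_comm
          _ = ∑ s, ∑ t, -(ζ s * ζ t *
              (((subM (Mi s) J * Mtil M0 Mi J t).mulVec (subV q J)) i)) := by
              refine Finset.sum_congr rfl fun s _ => Finset.sum_congr rfl fun t _ => ?_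
              rw [hv i t s]
              ring
          _ = -(∑ t, ∑ s, ζ t * ζ s *
              (((subM (Mi t) J * Mtil M0 Mi J s).mulVec (subV q J)) i)) := by
              simp [Finset.sum_neg_distrib]
      linarith
    intro ζ hζ
    refine ⟨?_, ?_, ?_⟩
    · intro j
      by_cases hj : j ∈ J
      · show 0 ≤ (D.mulVec ζ + r) ((⟨j, hj⟩ : J) : Fin n)
        rw [hzJ ζ ⟨j, hj⟩]
        exact hi2 ζ hζ ⟨j, hj⟩
      · rw [hz0 ζ j hj]
    · intro j
      by_cases hj : j ∈ J
      · show (0:ℝ) ≤ ((M0 + ∑ t, ζ t • Mi t).mulVec (D.mulVec ζ + r) + q)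
            ((⟨j, hj⟩ : J) : Fin n)
        rw [hQ0 ζ ⟨j, hj⟩]
      · have := hi3 ζ hζ j hj
        rwa [hrow ζ j]
    · refine Finset.sum_eq_zero fun j _ => ?_
      by_cases hj : j ∈ J
      · have : ((M0 + ∑ t, ζ t • Mi t).mulVec (D.mulVec ζ + r) + q) j = 0 :=
          hQ0 ζ ⟨j, hj⟩
        rw [this, mul_zero]
      · rw [hz0 ζ j hj, zero_mul]
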